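/- For each fixed s > 0, let t = t(n) ∈ (0,1) be the unique solution of 4t/(1+t)² = e^{-s/√n}. Then as n → ∞, t = 1 - 2√s·n^{-1/4} + 2s·n^{-1/2} - (3/2)s^{3/2}·n^{-3/4} + s²·n^{-1} + O(n^{-5/4}), and consequently log(2(1-t)/((1+t)·log(1/t))) = -s/(3√n) + s²/(45n) + O(n^{-5/4}). -/

import Mathlib

/-!
Put `u = (1 - t) / (1 + t)`. The equation says `u² = 1 - e^{-x}` with `x = s / √n`, the map
`t ↦ (1 - t) / (1 + t)` is an involution, and `log (1 / t) = log ((1 + u) / (1 - u)) = 2 artanh u`,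
so the argument of the logarithm is `u / artanh u`. With `y = √x = √s n^{-1/4}`, third order Taylor
bounds for `exp`, for the square root (through `|a - b| ≤ |a² - b²| / b`) and for `artanh`
(two-sided partial-sum bounds for `½ log ((1 + u) / (1 - u))`) give both expansions with error
`O(y⁵)` once `y ≤ 1/3`. For `y > 1/3` each term is itself `O(y⁵)`, so one constant serves every `n`.
-/

open Real

noncomputable def cayley (t : ℝ) : ℝ := (1 - t) / (1 + t)

lemma cayley_cayley {t : ℝ} (ht : t ≠ -1) : cayley (cayley t) = t := by
  have h : 1 + t ≠ 0 := fun h => ht (by linarith)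
  unfold cayley
  field_simp
  ring

lemma sqrt_one_sub_four_mul_div_sq {t : ℝ} (h₁ : -1 < t) (h₂ : t ≤ 1) :
    √(1 - 4 * t / (1 + t) ^ 2) = cayley t := by
  have h : 0 < 1 + t := by linarith
  unfold cayley
  rw [← sqrt_sq (div_nonneg (by linarith) h.le : 0 ≤ (1 - t) / (1 + t))]
  congr 1
  field_simp
  ring

lemma abs_sub_le_abs_sq_sub_sq_div {u v : ℝ} (hu : 0 ≤ u) (hv : 0 < v) :
    |u - v| ≤ |u ^ 2 - v ^ 2| / v := by
  rw [le_div_iff₀ hv, sq_sub_sq, abs_mul, mul_comm, abs_of_pos (by linarith : 0 < u + v)]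
  gcongr
  linarith

lemma abs_exp_neg_sub_le {x : ℝ} (hx₀ : 0 ≤ x) (hx₁ : x ≤ 1) :
    |exp (-x) - (1 - x + x ^ 2 / 2)| ≤ 2 / 9 * x ^ 3 := by
  have h := Real.exp_bound (x := -x) (by rwa [abs_neg, abs_of_nonneg hx₀]) (n := 3) (by norm_num)
  norm_num [Finset.sum_range_succ, Nat.factorial, abs_of_nonneg hx₀] at h
  rw [← sub_eq_add_neg, mul_comm] at h
  exact h

lemma abs_sqrt_one_sub_exp_neg_sq_sub_le {y : ℝ} (hy₀ : 0 < y) (hy₁ : y ≤ 1) :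
    |√(1 - exp (-y ^ 2)) - (y - y ^ 3 / 4)| ≤ y ^ 5 := by
  have hexp := abs_exp_neg_sub_le (sq_nonneg y) (by nlinarith)
  have hw : 0 ≤ 1 - exp (-y ^ 2) := by
    have := exp_le_one_iff.mpr (neg_nonpos.mpr (sq_nonneg y))
    linarith
  have hv : y / 2 ≤ y - y ^ 3 / 4 := by nlinarith
  calc |√(1 - exp (-y ^ 2)) - (y - y ^ 3 / 4)|
      ≤ |√(1 - exp (-y ^ 2)) ^ 2 - (y - y ^ 3 / 4) ^ 2| / (y - y ^ 3 / 4) :=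
        abs_sub_le_abs_sq_sub_sq_div (sqrt_nonneg _) (by linarith)
    _ ≤ (y ^ 6 / 2) / (y / 2) := by
        gcongr
        rw [sq_sqrt hw]
        have hy6 : 0 ≤ y ^ 6 := by positivity
        rw [abs_le] at hexp ⊢
        constructor <;> nlinarith [hexp.1, hexp.2]
    _ = y ^ 5 := by field_simp

lemma abs_cayley_sub_le {u y : ℝ} (hu : 0 ≤ u) (hy₀ : 0 ≤ y) (hy₁ : y ≤ 1)
    (h : |u - (y - y ^ 3 / 4)| ≤ y ^ 5) :
    |cayley u - (1 - 2 * y + 2 * y ^ 2 - 3 / 2 * y ^ 3 + y ^ 4)| ≤ 7 * y ^ 5 := by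
  set v := y - y ^ 3 / 4
  set P := 1 - 2 * y + 2 * y ^ 2 - 3 / 2 * y ^ 3 + y ^ 4 with hP_def
  have hP : |1 + P| ≤ 5 := by
    have := pow_le_one₀ (n := 2) hy₀ hy₁
    have := pow_le_one₀ (n := 3) hy₀ hy₁
    have := pow_le_one₀ (n := 4) hy₀ hy₁
    rw [abs_le, hP_def]
    constructor <;> linarith [pow_nonneg hy₀ 2, pow_nonneg hy₀ 3, pow_nonneg hy₀ 4]
  -- `1 - v - P (1 + v)` is `O(y⁵)` because `P` is the Taylor polynomial of `cayley (y - y³/4)`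
  have hvP : |1 - v - P * (1 + v)| ≤ 2 * y ^ 5 := by
    have : y ^ 7 ≤ y ^ 5 := pow_le_pow_of_le_one hy₀ hy₁ (by norm_num)
    have : 1 - v - P * (1 + v) = -(1 / 2) * y ^ 5 - 3 / 8 * y ^ 6 + 1 / 4 * y ^ 7 := by ring
    rw [this, abs_le]
    constructor <;> nlinarith [pow_nonneg hy₀ 5, pow_nonneg hy₀ 6, pow_nonneg hy₀ 7]
  have hsplit : cayley u - P = (1 - v - P * (1 + v) - (u - v) * (1 + P)) / (1 + u) := by
    unfold cayley; field_simp; ring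
  rw [hsplit, abs_div, abs_of_pos (by linarith : (0 : ℝ) < 1 + u), div_le_iff₀ (by linarith)]
  calc |1 - v - P * (1 + v) - (u - v) * (1 + P)|
      ≤ |1 - v - P * (1 + v)| + |u - v| * |1 + P| := (abs_sub _ _).trans_eq (by rw [abs_mul])
    _ ≤ 2 * y ^ 5 + y ^ 5 * 5 := by gcongr
    _ ≤ 7 * y ^ 5 * (1 + u) := by nlinarith [pow_nonneg hy₀ 5]

lemma abs_log_one_add_sub_le {a : ℝ} (ha₀ : 0 ≤ a) (ha₁ : a ≤ 1 / 2) :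
    |log (1 + a) - (a - a ^ 2 / 2)| ≤ 2 * a ^ 3 := by
  have h := abs_log_sub_add_sum_range_le (x := -a) (by rw [abs_neg, abs_of_nonneg ha₀]; linarith) 2
  norm_num [Finset.sum_range_succ, abs_of_nonneg ha₀] at h
  calc |log (1 + a) - (a - a ^ 2 / 2)| = |-a + a ^ 2 / 2 + log (1 + a)| := by
        congr 1; ring
    _ ≤ a ^ 3 / (1 - a) := h
    _ ≤ 2 * a ^ 3 := by rw [div_le_iff₀ (by linarith)]; nlinarith [pow_nonneg ha₀ 3]

lemma abs_log_div_half_log_add_le {u : ℝ} (hu₀ : 0 < u) (hu₁ : u ≤ 1 / 3) :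
    |log (u / (1 / 2 * log ((1 + u) / (1 - u)))) + (u ^ 2 / 3 + 13 * u ^ 4 / 90)| ≤ 4 * u ^ 6 := by
  have lo := sum_range_le_log_div hu₀.le (by linarith) 3
  have hi := log_div_le_sum_range_add hu₀.le (by linarith) 3
  norm_num [Finset.sum_range_succ] at lo hi
  -- `artanh u / u = 1 + a` with `a = u²/3 + u⁴/5 + O(u⁶)`; then `1/5 - (1/3)²/2 = 13/90`
  set a := 1 / 2 * log ((1 + u) / (1 - u)) / u - 1 with ha_def
  have hu6 : 0 < u ^ 6 := by positivity
  have hu2 : u ^ 2 ≤ 1 / 9 := by nlinarith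
  have ha_lo : u ^ 2 / 3 + u ^ 4 / 5 ≤ a := by
    rw [ha_def, le_sub_iff_add_le, le_div_iff₀ hu₀]; linarith
  have ha_hi : a ≤ u ^ 2 / 3 + u ^ 4 / 5 + 9 / 8 * u ^ 6 := by
    have : u ^ 7 / (1 - u ^ 2) ≤ 9 / 8 * u ^ 6 * u := by
      rw [div_le_iff₀ (by linarith)]
      nlinarith [mul_nonneg (pow_pos hu₀ 7).le (by linarith : (0 : ℝ) ≤ 9 / 8 * (1 - u ^ 2) - 1)]
    rw [ha_def, sub_le_iff_le_add, div_le_iff₀ hu₀]; linarith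
  have ha₀ : 0 ≤ a := by nlinarith [pow_nonneg hu₀.le 4]
  have ha_u2 : a ≤ u ^ 2 := by nlinarith [pow_nonneg hu₀.le 4]
  have hlog : log (u / (1 / 2 * log ((1 + u) / (1 - u)))) = -log (1 + a) := by
    rw [← log_inv, ha_def]; congr 1; field_simp; ring
  have hquad : |a - a ^ 2 / 2 - (u ^ 2 / 3 + 13 * u ^ 4 / 90)| ≤ 9 / 8 * u ^ 6 := by
    rw [abs_le]; constructor <;> nlinarith
  have hcube : 2 * a ^ 3 ≤ 2 * u ^ 6 := by
    have : a ^ 3 ≤ (u ^ 2) ^ 3 := pow_le_pow_left₀ ha₀ ha_u2 3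
    linarith [show (u ^ 2) ^ 3 = u ^ 6 by ring]
  rw [hlog, neg_add_eq_sub, abs_sub_comm]
  calc |log (1 + a) - (u ^ 2 / 3 + 13 * u ^ 4 / 90)|
      ≤ |log (1 + a) - (a - a ^ 2 / 2)| + |a - a ^ 2 / 2 - (u ^ 2 / 3 + 13 * u ^ 4 / 90)| :=
        abs_sub_le _ _ _
    _ ≤ 2 * u ^ 6 + 9 / 8 * u ^ 6 :=
        add_le_add ((abs_log_one_add_sub_le ha₀ (by linarith)).trans hcube) hquad
    _ ≤ 4 * u ^ 6 := by linarith

lemma two_mul_one_sub_div_eq_cayley_div {t : ℝ} (ht₀ : 0 < t) :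
    2 * (1 - t) / ((1 + t) * log (1 / t)) =
      cayley t / (1 / 2 * log ((1 + cayley t) / (1 - cayley t))) := by
  have ht : 1 + t ≠ 0 := by linarith
  have h : (1 + cayley t) / (1 - cayley t) = 1 / t := by
    rw [cayley, one_add_div ht, one_sub_div ht, div_div_div_cancel_right₀ ht,
      show 1 + t + (1 - t) = 2 * 1 by ring, show 1 + t - (1 - t) = 2 * t by ring,
      mul_div_mul_left _ _ two_ne_zero]
  rw [h, cayley]
  field_simp

lemma abs_sub_expansion_le_of_le_one {t y : ℝ} (ht : t ∈ Set.Ioo 0 1) (hy₀ : 0 < y) (hy₁ : y ≤ 1)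
    (h : 4 * t / (1 + t) ^ 2 = exp (-y ^ 2)) :
    |t - (1 - 2 * y + 2 * y ^ 2 - 3 / 2 * y ^ 3 + y ^ 4)| ≤ 7 * y ^ 5 := by
  have hu : cayley t = √(1 - exp (-y ^ 2)) := by
    rw [← h, sqrt_one_sub_four_mul_div_sq (by linarith [ht.1]) ht.2.le]
  rw [← cayley_cayley (by linarith [ht.1] : t ≠ -1), hu]
  exact abs_cayley_sub_le (sqrt_nonneg _) hy₀.le hy₁ (abs_sqrt_one_sub_exp_neg_sq_sub_le hy₀ hy₁)

lemma abs_log_sub_expansion_le_of_le_third {t y : ℝ} (ht : t ∈ Set.Ioo 0 1) (hy₀ : 0 < y)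
    (hy₁ : y ≤ 1 / 3)
    (h : 4 * t / (1 + t) ^ 2 = exp (-y ^ 2)) :
    |log (2 * (1 - t) / ((1 + t) * log (1 / t))) - (-y ^ 2 / 3 + y ^ 4 / 45)| ≤ 5 * y ^ 6 := by
  set w := 1 - exp (-y ^ 2) with hw_def
  have hw₀ : 0 < w := by
    have := exp_lt_one_iff.mpr (neg_lt_zero.mpr (pow_pos hy₀ 2)); linarith
  have hw_le : w ≤ y ^ 2 := by linarith [add_one_le_exp (-y ^ 2)]
  have hexp := abs_exp_neg_sub_le (x := y ^ 2) (sq_nonneg y) (by nlinarith)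
  rw [← sub_sub_cancel 1 (exp (-y ^ 2)), ← hw_def] at hexp
  have hu : cayley t = √w := by
    rw [hw_def, ← h, sqrt_one_sub_four_mul_div_sq (by linarith [ht.1]) ht.2.le]
  have hu₂ : √w ^ 2 = w := sq_sqrt hw₀.le
  have hu₁ : √w ≤ 1 / 3 := by nlinarith [sqrt_nonneg w]
  have hlog := abs_log_div_half_log_add_le (sqrt_pos.mpr hw₀) hu₁
  rw [show √w ^ 4 = (√w ^ 2) ^ 2 by ring, show √w ^ 6 = (√w ^ 2) ^ 3 by ring, hu₂] at hlog
  have hw3 : w ^ 3 ≤ (y ^ 2) ^ 3 := pow_le_pow_left₀ hw₀.le hw_le 3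
  have hconv : |-(w / 3 + 13 * w ^ 2 / 90) - (-y ^ 2 / 3 + y ^ 4 / 45)| ≤ y ^ 6 / 3 := by
    rw [abs_le] at hexp ⊢
    constructor <;> nlinarith [pow_nonneg hy₀.le 6]
  rw [two_mul_one_sub_div_eq_cayley_div ht.1, hu]
  calc _ ≤ _ := abs_sub_le _ (-(w / 3 + 13 * w ^ 2 / 90)) _
    _ ≤ 4 * w ^ 3 + y ^ 6 / 3 := by
        rw [sub_neg_eq_add]; exact add_le_add hlog hconv
    _ ≤ 5 * y ^ 6 := by nlinarith [pow_nonneg hy₀.le 6]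

lemma abs_log_two_mul_one_sub_div_le {t x : ℝ} (ht : t ∈ Set.Ioo 0 1)
    (h : 4 * t / (1 + t) ^ 2 = exp (-x)) :
    |log (2 * (1 - t) / ((1 + t) * log (1 / t)))| ≤ x + 1 := by
  obtain ⟨ht₀, ht₁⟩ := ht
  have hx : 0 ≤ x := by
    have : exp (-x) ≤ 1 := by
      rw [← h, div_le_one (by positivity)]; nlinarith [sq_nonneg (1 - t)]
    linarith [exp_le_one_iff.mp this]
  have hL₁ : 1 - t ≤ log (1 / t) := by
    rw [one_div, log_inv]; linarith [log_le_sub_one_of_pos ht₀]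
  have hL₂ : log (1 / t) ≤ (1 - t) / t := by
    have := log_le_sub_one_of_pos (one_div_pos.mpr ht₀)
    rwa [div_sub_one ht₀.ne'] at this
  have hL₀ : 0 < log (1 / t) := by linarith
  set A := 2 * (1 - t) / ((1 + t) * log (1 / t))
  have hA_le : A ≤ 2 := by
    rw [div_le_iff₀ (by positivity)]; nlinarith
  have hA_ge : exp (-x) / 2 ≤ A := by
    rw [← h, le_div_iff₀ (by positivity)]
    rw [le_div_iff₀ ht₀] at hL₂
    field_simp
    nlinarith
  have hlog₂ : log 2 < 1 := by linarith [log_two_lt_d9]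
  have hA_lo : -x - log 2 ≤ log A := by
    have := log_le_log (by positivity) hA_ge
    rwa [log_div (exp_pos _).ne' two_ne_zero, log_exp] at this
  have hA_hi : log A ≤ log 2 := log_le_log (by positivity) hA_le
  rw [abs_le]; constructor <;> linarith

lemma pow_le_pow_mul_of_one_le_mul {c y : ℝ} {k m : ℕ} (hy : 0 ≤ y) (hc : 1 ≤ c * y)
    (hkm : k ≤ m) : y ^ k ≤ c ^ (m - k) * y ^ m := by
  obtain ⟨j, rfl⟩ := Nat.exists_eq_add_of_le hkm
  calc y ^ k = y ^ k * 1 := (mul_one _).symm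
    _ ≤ y ^ k * (c * y) ^ j := by gcongr; exact one_le_pow₀ hc
    _ = c ^ (k + j - k) * y ^ (k + j) := by rw [Nat.add_sub_cancel_left]; ring

lemma abs_sub_expansions_le_mul_pow_five {t y : ℝ} (ht : t ∈ Set.Ioo 0 1) (hy : 0 < y)
    (h : 4 * t / (1 + t) ^ 2 = exp (-y ^ 2)) :
    |t - (1 - 2 * y + 2 * y ^ 2 - 3 / 2 * y ^ 3 + y ^ 4)| ≤ 500 * y ^ 5 ∧
      |log (2 * (1 - t) / ((1 + t) * log (1 / t))) - (-y ^ 2 / 3 + y ^ 4 / 45)| ≤ 500 * y ^ 5 := by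
  have hy₅ : 0 < y ^ 5 := by positivity
  rcases le_or_gt y (1 / 3) with hsmall | hlarge
  · have hy₆ : y ^ 6 ≤ y ^ 5 := pow_le_pow_of_le_one hy.le (by linarith) (by norm_num)
    exact ⟨(abs_sub_expansion_le_of_le_one ht hy (by linarith) h).trans (by linarith),
      (abs_log_sub_expansion_le_of_le_third ht hy hsmall h).trans (by linarith)⟩
  have hc : 1 ≤ 3 * y := by linarith
  have p₀ := pow_le_pow_mul_of_one_le_mul (k := 0) (m := 5) hy.le hc (by norm_num)
  have p₁ := pow_le_pow_mul_of_one_le_mul (k := 1) (m := 5) hy.le hc (by norm_num)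
  have p₂ := pow_le_pow_mul_of_one_le_mul (k := 2) (m := 5) hy.le hc (by norm_num)
  have p₃ := pow_le_pow_mul_of_one_le_mul (k := 3) (m := 5) hy.le hc (by norm_num)
  have p₄ := pow_le_pow_mul_of_one_le_mul (k := 4) (m := 5) hy.le hc (by norm_num)
  norm_num at p₀ p₁ p₂ p₃ p₄
  have hF := abs_le.mp (abs_log_two_mul_one_sub_div_le ht h)
  obtain ⟨ht₀, ht₁⟩ := ht
  constructor <;> rw [abs_le] <;> constructor <;>
    nlinarith [pow_pos hy 2, pow_pos hy 3, pow_pos hy 4]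

theorem t_asymptotics (s : ℝ) (hs : 0 < s) :
    ∃ C > 0, ∀ n : ℕ, 1 ≤ n → ∀ t : ℝ, t ∈ Set.Ioo (0 : ℝ) 1 →
      4 * t / (1 + t) ^ 2 = Real.exp (-s / Real.sqrt n) →
      |t - (1 - 2 * Real.sqrt s * (n : ℝ) ^ (-(1 / 4 : ℝ))
              + 2 * s * (n : ℝ) ^ (-(1 / 2 : ℝ))
              - (3 / 2) * s ^ ((3 : ℝ) / 2) * (n : ℝ) ^ (-(3 / 4 : ℝ))
              + s ^ 2 * (n : ℝ) ^ (-(1 : ℝ)))|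
          ≤ C * (n : ℝ) ^ (-(5 / 4 : ℝ))
        ∧ |Real.log (2 * (1 - t) / ((1 + t) * Real.log (1 / t)))
              - (-s / (3 * Real.sqrt n) + s ^ 2 / (45 * n))|
          ≤ C * (n : ℝ) ^ (-(5 / 4 : ℝ)) := by
  obtain ⟨r, hr, rfl⟩ : ∃ r, 0 < r ∧ s = r ^ 2 := ⟨√s, sqrt_pos.mpr hs, (sq_sqrt hs.le).symm⟩
  refine ⟨500 * r ^ 5, by positivity, fun n hn t ht h => ?_⟩
  have hn₀ : (0 : ℝ) < n := by exact_mod_cast hn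
  set m := (n : ℝ) ^ (-(1 / 4 : ℝ)) with hm
  have hpow (k : ℕ) : (n : ℝ) ^ (-(k / 4 : ℝ)) = m ^ k := by
    rw [hm, ← rpow_natCast, ← rpow_mul hn₀.le]; ring_nf
  have hm₂ : √n = (m ^ 2)⁻¹ := by
    rw [← hpow, sqrt_eq_rpow, rpow_neg hn₀.le, inv_inv]; norm_num
  have hm₄ : (n : ℝ) = (m ^ 4)⁻¹ := by
    rw [← hpow, rpow_neg hn₀.le, inv_inv]; norm_num
  have hr₃ : (r ^ 2) ^ ((3 : ℝ) / 2) = r ^ 3 := by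
    rw [← rpow_natCast, ← rpow_mul hr.le]; norm_num
  obtain ⟨hA, hB⟩ := abs_sub_expansions_le_mul_pow_five (y := r * m) ht (by positivity)
    (by rw [h, hm₂]; congr 1; field_simp)
  rw [show (-(1 / 2 : ℝ)) = -((2 : ℕ) / 4 : ℝ) by norm_num,
    show (-(3 / 4 : ℝ)) = -((3 : ℕ) / 4 : ℝ) by norm_num,
    show (-(1 : ℝ)) = -((4 : ℕ) / 4 : ℝ) by norm_num,
    show (-(5 / 4 : ℝ)) = -((5 : ℕ) / 4 : ℝ) by norm_num, hpow, hpow, hpow, hpow, hr₃, hm₂, hm₄,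
    sqrt_sq hr.le, show -r ^ 2 / (3 * (m ^ 2)⁻¹) + (r ^ 2) ^ 2 / (45 * (m ^ 4)⁻¹)
      = -(r * m) ^ 2 / 3 + (r * m) ^ 4 / 45 by field_simp]
  exact ⟨(congrArg _ (by ring)).trans_le (hA.trans_eq (by ring)), hB.trans_eq (by ring)⟩
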